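/- arXiv:1702.07637 — 2 statements merged into one kernel-verified Lean document; each statement's English description precedes it below -/
import Mathlib

section
/- Let $x : \{1,\dots,n\} \to [0,1]$, $A \in [0,1]$, $\alpha \in (0,1]$, and suppose $|x_i - A| \leq \delta_1$ for $i \in S$ (with $|S| = m$) and $|x_j - A| \leq \delta_2$ for $j \notin S$, where $\delta_1, \delta_2$ are as in the paper and $\delta_1 + \delta_2 \leq \epsilon$. Then for any noise values $\xi_i \in [-\delta,\delta]$, the updated values $x_i' = \alpha A + (1-\alpha)\bar{x} + \xi_i$ for $i \in S$ and $x_j' = \bar{x} + \xi_j$ for $j \notin S$, where $\bar{x} = \frac{1}{n}\sum_k x_k$, satisfy $|x_i' - A| \leq \delta_1$ for $i \in S$ and $|x_j' - A| \leq \delta_2$ for $j \notin S$. -/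
theorem one_step_invariance (n m : ℕ) (hn : 1 ≤ n) (hm : 1 ≤ m) (hmn : m ≤ n)
    (S : Finset (Fin n)) (hS : S.card = m)
    (x : Fin n → ℝ) (hx : ∀ i, x i ∈ Set.Icc (0 : ℝ) 1)
    (A : ℝ) (hA : A ∈ Set.Icc (0 : ℝ) 1)
    (α : ℝ) (hα : 0 < α) (hα1 : α ≤ 1)
    (ε δ : ℝ) (hδ : 0 < δ)
    (δ1 δ2 : ℝ)
    (hδ1 : δ1 = (n : ℝ) * (1 - α) * δ / (m * α) + δ)
    (hδ2 : δ2 = (n : ℝ) * δ / (m * α) + δ)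
    (hsum : δ1 + δ2 ≤ ε)
    (hxS : ∀ i ∈ S, |x i - A| ≤ δ1)
    (hxSc : ∀ i ∉ S, |x i - A| ≤ δ2)
    (ξ : Fin n → ℝ) (hξ : ∀ i, ξ i ∈ Set.Icc (-δ) δ)
    (xbar : ℝ) (hxbar : xbar = (1 / (n : ℝ)) * ∑ k, x k)
    (x' : Fin n → ℝ)
    (hx'S : ∀ i ∈ S, x' i = α * A + (1 - α) * xbar + ξ i)
    (hx'Sc : ∀ i ∉ S, x' i = xbar + ξ i) :
    (∀ i ∈ S, |x' i - A| ≤ δ1) ∧ (∀ i ∉ S, |x' i - A| ≤ δ2) := by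
  have hn0 : (0:ℝ) < (n:ℝ) := by exact_mod_cast hn
  have hm0 : (0:ℝ) < (m:ℝ) := by exact_mod_cast hm
  have hmn' : (m:ℝ) ≤ (n:ℝ) := by exact_mod_cast hmn
  -- xbar - A = (1/n) * ∑ (x k - A)
  have hdiff : xbar - A = (1 / (n:ℝ)) * ∑ k, (x k - A) := by
    rw [hxbar, Finset.sum_sub_distrib, Finset.sum_const, Finset.card_univ,
      Fintype.card_fin]
    field_simp
    rw [nsmul_eq_mul]
  -- bound the sum of absolute values
  have hsum1 : ∑ i ∈ S, |x i - A| ≤ (m:ℝ) * δ1 := by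
    calc ∑ i ∈ S, |x i - A| ≤ ∑ _i ∈ S, δ1 := Finset.sum_le_sum hxS
    _ = (m:ℝ) * δ1 := by rw [Finset.sum_const, hS]; simp [nsmul_eq_mul]
  have hsum2 : ∑ i ∈ Sᶜ, |x i - A| ≤ ((n:ℝ) - m) * δ2 := by
    have hcard : (Sᶜ : Finset (Fin n)).card = n - m := by
      rw [Finset.card_compl, hS, Fintype.card_fin]
    calc ∑ i ∈ Sᶜ, |x i - A| ≤ ∑ _i ∈ Sᶜ, δ2 := by
          refine Finset.sum_le_sum fun i hi => hxSc i ?_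
          simpa using hi
      _ = ((n:ℝ) - m) * δ2 := by
          rw [Finset.sum_const, hcard, nsmul_eq_mul, Nat.cast_sub hmn]
  have habs : |xbar - A| ≤ (n:ℝ) * δ / (m * α) := by
    have h1 : |∑ k, (x k - A)| ≤ ∑ k, |x k - A| := Finset.abs_sum_le_sum_abs _ _
    have h2 : ∑ k, |x k - A| = ∑ i ∈ S, |x i - A| + ∑ i ∈ Sᶜ, |x i - A| :=
      (Finset.sum_add_sum_compl S _).symm
    have h3 : ((m:ℝ) * δ1 + ((n:ℝ) - m) * δ2) / n = (n:ℝ) * δ / (m * α) := by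
      rw [hδ1, hδ2]
      field_simp
      ring
    rw [hdiff, abs_mul, abs_of_pos (by positivity : (0:ℝ) < 1/(n:ℝ))]
    calc 1 / (n:ℝ) * |∑ k, (x k - A)| ≤ 1/(n:ℝ) * ((m:ℝ) * δ1 + ((n:ℝ) - m) * δ2) := by
          refine mul_le_mul_of_nonneg_left ?_ (by positivity)
          rw [h2] at h1
          exact h1.trans (add_le_add hsum1 hsum2)
      _ = (n:ℝ) * δ / (m * α) := by rw [← h3]; ring
  constructor
  · intro i hi
    have hξi := hξ i
    have : x' i - A = (1 - α) * (xbar - A) + ξ i := by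
      rw [hx'S i hi]; ring
    rw [this]
    calc |(1 - α) * (xbar - A) + ξ i| ≤ |(1 - α) * (xbar - A)| + |ξ i| := abs_add_le _ _
      _ ≤ (1 - α) * ((n:ℝ) * δ / (m * α)) + δ := by
          refine add_le_add ?_ (abs_le.mpr ⟨hξi.1, hξi.2⟩)
          rw [abs_mul, abs_of_nonneg (by linarith : (0:ℝ) ≤ 1 - α)]
          exact mul_le_mul_of_nonneg_left habs (by linarith)
      _ = δ1 := by rw [hδ1]; field_simp
  · intro i hi
    have hξi := hξ i
    have : x' i - A = (xbar - A) + ξ i := by rw [hx'Sc i hi]; ring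
    rw [this]
    calc |(xbar - A) + ξ i| ≤ |xbar - A| + |ξ i| := abs_add_le _ _
      _ ≤ (n:ℝ) * δ / (m * α) + δ := add_le_add habs (abs_le.mpr ⟨hξi.1, hξi.2⟩)
      _ = δ2 := hδ2.symm
end

section
/- In the noisy truth-seeking model where all agents are mutual neighbors and noise is bounded by $\delta$, if at some time all truth seekers are within $\delta_1$ of $A$ and all other agents within $\delta_2$ of $A$, with $0 < \delta \leq \underline{\delta}$, then by induction the same bounds hold at all subsequent times: $|x_i(t) - A| \leq \delta_1$ for $i \in S$ and $|x_j(t) - A| \leq \delta_2$ for $j \notin S$, for all $t \geq T$. -/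
/-!
If every truth seeker is within `δ₁` of `A` and every agent within `δ₂`, then, because
`δ₁ + δ₂ ≤ ε`, every agent's neighbourhood contains all truth seekers. The neighbourhood
average is then within `(m δ₁ + (n - m) δ₂) / n = n δ / (m α)` of `A`: the worst case is the
largest neighbourhood. Pulling towards `A` at rate `α`, adding noise of size `δ` and clipping
to `[0, 1]` (which never moves a point away from `A ∈ [0, 1]`) gives back `δ₁` and `δ₂`.
-/

open Finset

theorem abs_min_max_sub_le {a b A : ℝ} (y : ℝ) (ha : a ≤ A) (hb : A ≤ b) :
    |min b (max a y) - A| ≤ |y - A| :=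
  calc |min b (max a y) - A| = |min b (max a y) - min b (max a A)| := by
        rw [max_eq_right ha, min_eq_right hb]
    _ ≤ max |b - b| |max a y - max a A| := abs_min_sub_min_le_max ..
    _ = |max a y - max a A| := by simp
    _ ≤ |y - A| := by simpa only [max_comm a] using abs_max_sub_max_le_abs y A a

theorem abs_clip_affine_sub_le {a A K δ z ξ : ℝ} (ha₁ : a ≤ 1)
    (hA : A ∈ Set.Icc (0 : ℝ) 1) (hz : |z - A| ≤ K) (hξ : |ξ| ≤ δ) :
    |min 1 (max 0 ((1 - a) * z + a * A + ξ)) - A| ≤ (1 - a) * K + δ :=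
  calc |min 1 (max 0 ((1 - a) * z + a * A + ξ)) - A|
      ≤ |(1 - a) * z + a * A + ξ - A| := abs_min_max_sub_le _ hA.1 hA.2
    _ = |(1 - a) * (z - A) + ξ| := by ring_nf
    _ ≤ |(1 - a) * (z - A)| + |ξ| := abs_add_le _ _
    _ ≤ (1 - a) * K + δ := by
        rw [abs_mul, abs_of_nonneg (sub_nonneg.2 ha₁)]
        gcongr

theorem abs_sum_div_card_sub_le {ι : Type*} {N : Finset ι} (hN : N.Nonempty) (y : ι → ℝ)
    {A B : ℝ} (h : ∑ j ∈ N, |y j - A| ≤ #N * B) :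
    |(∑ j ∈ N, y j) / #N - A| ≤ B := by
  have hc : (0 : ℝ) < #N := by exact_mod_cast hN.card_pos
  have hsub : (∑ j ∈ N, y j) / #N - A = (∑ j ∈ N, (y j - A)) / #N := by
    rw [sum_sub_distrib, sum_const, nsmul_eq_mul]
    field_simp
  rw [hsub, abs_div, abs_of_pos hc, div_le_iff₀ hc, mul_comm]
  exact (abs_sum_le_sum_abs _ _).trans h

theorem sum_le_of_subset_of_le {ι : Type*} [DecidableEq ι] {S N : Finset ι} (hSN : S ⊆ N)
    {f : ι → ℝ} {r₁ r₂ : ℝ} (h₁ : ∀ j ∈ S, f j ≤ r₁) (h₂ : ∀ j ∈ N, f j ≤ r₂) :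
    ∑ j ∈ N, f j ≤ #S * r₁ + (#N - #S) * r₂ := by
  rw [← sum_sdiff hSN, add_comm]
  have hS := sum_le_card_nsmul S f r₁ h₁
  have hNS := sum_le_card_nsmul (N \ S) f r₂ (fun j hj => h₂ j (sdiff_subset hj))
  rw [nsmul_eq_mul] at hS hNS
  rw [card_sdiff_of_subset hSN, Nat.cast_sub (card_le_card hSN)] at hNS
  linarith

section NeighborAverage

variable {ι : Type*} [Fintype ι]

noncomputable def neighborAvg (ε : ℝ) (y : ι → ℝ) (i : ι) : ℝ :=
  (∑ j ∈ univ.filter (fun j => |y j - y i| ≤ ε), y j) /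
    #(univ.filter (fun j => |y j - y i| ≤ ε))

theorem abs_neighborAvg_sub_le {ε A r₁ r₂ : ℝ} {y : ι → ℝ} {S : Finset ι} (hS : S.Nonempty)
    (h₁ : ∀ j ∈ S, |y j - A| ≤ r₁) (h₂ : ∀ j, |y j - A| ≤ r₂) (hr : r₁ ≤ r₂)
    (hε : r₁ + r₂ ≤ ε) (i : ι) :
    |neighborAvg ε y i - A| ≤ r₂ - #S * (r₂ - r₁) / Fintype.card ι := by
  classical
  set N := univ.filter (fun j => |y j - y i| ≤ ε)
  have hSN : S ⊆ N := fun j hj => mem_filter.2 ⟨mem_univ j, by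
    calc |y j - y i| ≤ |y j - A| + |A - y i| := abs_sub_le _ _ _
      _ ≤ ε := by linarith [h₁ j hj, h₂ i, abs_sub_comm A (y i)]⟩
  have hNn : (#N : ℝ) ≤ Fintype.card ι := by exact_mod_cast card_le_univ N
  have hn : (0 : ℝ) < Fintype.card ι := by exact_mod_cast (hS.mono (subset_univ S)).card_pos
  refine abs_sum_div_card_sub_le (hS.mono hSN) y ?_
  have hsum := sum_le_of_subset_of_le hSN h₁ (fun j _ => h₂ j)
  have hfrac : #N * (#S * (r₂ - r₁) / Fintype.card ι) ≤ #S * (r₂ - r₁) := by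
    rw [mul_div_assoc', div_le_iff₀ hn, mul_comm]
    exact mul_le_mul_of_nonneg_left hNn (mul_nonneg (Nat.cast_nonneg _) (sub_nonneg.2 hr))
  linarith

end NeighborAverage

theorem truthSeeking_radii_sum_le {n m α δ ε : ℝ} (hn : 0 ≤ n) (hm : 0 < m) (hα : 0 < α)
    (hα1 : α ≤ 1) (hδ : δ ≤ m * α / (2 * n + (2 * m - n) * α) * ε) :
    (n * (1 - α) * δ / (m * α) + δ) + (n * δ / (m * α) + δ) ≤ ε := by
  have hD : 0 < 2 * n + (2 * m - n) * α := by nlinarith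
  rw [div_mul_eq_mul_div, le_div_iff₀ hD] at hδ
  have hmα : 0 < m * α := mul_pos hm hα
  calc (n * (1 - α) * δ / (m * α) + δ) + (n * δ / (m * α) + δ)
      = δ * (2 * n + (2 * m - n) * α) / (m * α) := by field_simp; ring
    _ ≤ ε := by rw [div_le_iff₀ hmα]; linarith

theorem truthSeeking_step_bounds {ι : Type*} [Fintype ι] [DecidableEq ι] {S : Finset ι}
    (hS : S.Nonempty) {A α ε δ K : ℝ} (hA : A ∈ Set.Icc (0 : ℝ) 1) (hα : 0 < α) (hα1 : α ≤ 1)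
    (hδ : 0 ≤ δ) (hK : #S * α * K = Fintype.card ι * δ)
    (hε : (1 - α) * K + δ + (K + δ) ≤ ε)
    {y y' ξ : ι → ℝ} (hξ : ∀ i, |ξ i| ≤ δ)
    (hy' : ∀ i, y' i = min 1 (max 0 ((1 - α * (if i ∈ S then 1 else 0)) * neighborAvg ε y i
      + α * (if i ∈ S then 1 else 0) * A + ξ i)))
    (h₁ : ∀ i ∈ S, |y i - A| ≤ (1 - α) * K + δ) (h₂ : ∀ i ∉ S, |y i - A| ≤ K + δ) :
    (∀ i ∈ S, |y' i - A| ≤ (1 - α) * K + δ) ∧ (∀ i ∉ S, |y' i - A| ≤ K + δ) := by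
  have hn : (0 : ℝ) < Fintype.card ι := by exact_mod_cast (hS.mono (subset_univ S)).card_pos
  have hK0 : 0 ≤ K := by
    have : (0 : ℝ) < #S * α := mul_pos (by exact_mod_cast hS.card_pos) hα
    nlinarith
  have hr : (1 - α) * K + δ ≤ K + δ := by nlinarith
  have hall : ∀ j, |y j - A| ≤ K + δ := fun j => by
    by_cases hj : j ∈ S
    exacts [(h₁ j hj).trans hr, h₂ j hj]
  have havg : ∀ i, |neighborAvg ε y i - A| ≤ K := fun i =>
    (abs_neighborAvg_sub_le hS h₁ hall hr hε i).trans_eq (by field_simp; linarith)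
  have hstep : ∀ i, |y' i - A| ≤ (1 - α * (if i ∈ S then 1 else 0)) * K + δ := fun i => by
    rw [hy']
    exact abs_clip_affine_sub_le (by split_ifs <;> linarith) hA (havg i) (hξ i)
  refine ⟨fun i hi => ?_, fun i hi => ?_⟩
  · simpa [hi] using hstep i
  · simpa [hi] using hstep i

theorem lemma2_invariance_general (n m : ℕ) (hm : 1 ≤ m)
    (S : Finset (Fin n)) (hS : S.card = m)
    (A α ε δ : ℝ) (hA : A ∈ Set.Icc (0 : ℝ) 1)
    (hα : 0 < α) (hα1 : α ≤ 1) (hδ : 0 < δ)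
    (hδub : δ ≤ min ((m : ℝ) * α / (2 * n + (2 * m - n) * α) * ε)
        ((m : ℝ) / (n + 2 * m) * ε))
    (δ1 δ2 : ℝ)
    (hδ1 : δ1 = (n : ℝ) * (1 - α) * δ / (m * α) + δ)
    (hδ2 : δ2 = (n : ℝ) * δ / (m * α) + δ)
    (x : ℕ → Fin n → ℝ) (ξ : ℕ → Fin n → ℝ)
    (hξ : ∀ t i, ξ t i ∈ Set.Icc (-δ) δ)
    (hmodel : ∀ t i,
      x (t + 1) i =
        min 1 (max 0
          ((1 - α * (if i ∈ S then 1 else 0)) *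
              ((∑ j ∈ Finset.univ.filter (fun j => |x t j - x t i| ≤ ε), x t j) /
                (Finset.univ.filter (fun j => |x t j - x t i| ≤ ε)).card)
            + α * (if i ∈ S then 1 else 0) * A + ξ (t + 1) i)))
    (T : ℕ)
    (hTS : ∀ i ∈ S, |x T i - A| ≤ δ1)
    (hTSc : ∀ i ∉ S, |x T i - A| ≤ δ2) :
    ∀ t, T ≤ t → (∀ i ∈ S, |x t i - A| ≤ δ1) ∧ (∀ i ∉ S, |x t i - A| ≤ δ2) := by
  have hm0 : (0 : ℝ) < m := by exact_mod_cast hm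
  have hε := truthSeeking_radii_sum_le (Nat.cast_nonneg n) hm0 hα hα1
    (hδub.trans (min_le_left _ _))
  obtain ⟨K, hK⟩ : ∃ K : ℝ, K = n * δ / (m * α) := ⟨_, rfl⟩
  rw [← hδ1, ← hδ2] at hε
  have hδ1K : δ1 = (1 - α) * K + δ := by rw [hδ1, hK]; ring
  have hδ2K : δ2 = K + δ := by rw [hδ2, hK]
  have hSK : #S * α * K = Fintype.card (Fin n) * δ := by
    rw [hS, Fintype.card_fin, hK]; field_simp
  subst hδ1K hδ2K
  intro t ht
  induction t, ht using Nat.le_induction with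
  | base => exact ⟨hTS, hTSc⟩
  | succ t _ ih =>
    exact truthSeeking_step_bounds (card_pos.1 (hS ▸ hm)) hA hα hα1 hδ.le hSK hε
      (fun i => abs_le.2 (hξ (t + 1) i)) (hmodel t) ih.1 ih.2

theorem lemma2_invariance (n m : ℕ) (hn : 1 ≤ n) (hm : 1 ≤ m) (hmn : m ≤ n)
    (S : Finset (Fin n)) (hS : S.card = m)
    (A α ε δ : ℝ) (hA : A ∈ Set.Icc (0 : ℝ) 1)
    (hα : 0 < α) (hα1 : α ≤ 1) (hε : 0 < ε) (hδ : 0 < δ)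
    (hδub : δ ≤ min ((m : ℝ) * α / (2 * n + (2 * m - n) * α) * ε)
        ((m : ℝ) / (n + 2 * m) * ε))
    (δ1 δ2 : ℝ)
    (hδ1 : δ1 = (n : ℝ) * (1 - α) * δ / (m * α) + δ)
    (hδ2 : δ2 = (n : ℝ) * δ / (m * α) + δ)
    (x : ℕ → Fin n → ℝ) (ξ : ℕ → Fin n → ℝ)
    (hξ : ∀ t i, ξ t i ∈ Set.Icc (-δ) δ)
    (hmodel : ∀ t i,
      x (t + 1) i =
        min 1 (max 0
          ((1 - α * (if i ∈ S then 1 else 0)) *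
              ((∑ j ∈ Finset.univ.filter (fun j => |x t j - x t i| ≤ ε), x t j) /
                (Finset.univ.filter (fun j => |x t j - x t i| ≤ ε)).card)
            + α * (if i ∈ S then 1 else 0) * A + ξ (t + 1) i)))
    (T : ℕ)
    (hTS : ∀ i ∈ S, |x T i - A| ≤ δ1)
    (hTSc : ∀ i ∉ S, |x T i - A| ≤ δ2) :
    ∀ t, T ≤ t → (∀ i ∈ S, |x t i - A| ≤ δ1) ∧ (∀ i ∉ S, |x t i - A| ≤ δ2) :=
  lemma2_invariance_general n m hm S hS A α ε δ hA hα hα1 hδ hδub δ1 δ2 hδ1 hδ2 x ξ hξ hmodel T hTS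
    hTSc
end
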